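/- Let G = (V,E) be a finite simple graph and m ≥ 2 an integer. Let A(G;m) ⊂ ℝ^V be the hyperplane arrangement consisting of the hyperplanes {z : z_u = z_w} for each edge {u,w} ∈ E together with the hyperplanes {z : z_v = i} for each v ∈ V and i ∈ {0, 1, …, m−2}. Then the number of bounded connected components of ℝ^V ∖ A(G;m) equals (−1)^{|V|} χ_G(−(m−2)). -/

import Mathlib

open SimpleGraph Polynomial

/-- Number of proper colorings of `G` with `k` colors. -/
noncomputable def properColoringCount {V : Type*} (G : SimpleGraph V) (k : ℕ) : ℕ :=
  Nat.card {f : V → Fin k // ∀ u v, G.Adj u v → f u ≠ f v}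

/-- `P` is the chromatic polynomial of `G`. -/
def IsChromaticPoly {V : Type*} (G : SimpleGraph V) (P : Polynomial ℤ) : Prop :=
  ∀ k : ℕ, P.eval (k : ℤ) = properColoringCount G k

/-- The complement in `ℝ^V` of the arrangement `A(G;m)`, consisting of the hyperplanes
`z_u = z_w` for edges `{u,w}` of `G` and `z_v = i` for `v ∈ V`, `i ∈ {0,…,m-2}`. -/
def arrComplement {V : Type*} (G : SimpleGraph V) (m : ℕ) : Set (V → ℝ) :=
  {z | (∀ u w, G.Adj u w → z u ≠ z w) ∧ ∀ v : V, ∀ i : ℕ, i ≤ m - 2 → z v ≠ (i : ℝ)}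

/-!
Write `k = m - 2`. A region containing a point with a coordinate outside `[0, k]` is unbounded:
pushing all such coordinates outwards at unit speed keeps their order and never meets a
hyperplane. So the bounded regions are those inside the open cube `(0, k)^V`, and each is a
convex open cell, determined by the unit cube `∏ v, (c v, c v + 1)` containing it and by the
orientation it induces on the edges.

Cells obey deletion–contraction along an edge `ab`. The hyperplane `z_a = z_b` cuts a cell of
`G - ab` in two exactly when it meets it (a cell is convex and open), and the cells it meets are
those of `G / ab`. Hence the number of cells satisfies `r(G) = r(G - ab) + r(G / ab)`, and an
edgeless graph has `k ^ |V|` cells; `(-1)^|V| χ_G(-k)` satisfies the same recursion, since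
`χ_{G - ab} = χ_G + χ_{G / ab}`.
-/

lemma Set.ncard_setOf_eq_natCard {α : Type*} (p : α → Prop) :
    {x | p x}.ncard = Nat.card {x // p x} :=
  (Nat.card_coe_set_eq _).symm

lemma Set.ncard_image_eq_of_eq_iff {α β γ : Type*} {f : α → β} {g : α → γ} {s : Set α}
    (h : ∀ x ∈ s, ∀ y ∈ s, f x = f y ↔ g x = g y) : (f '' s).ncard = (g '' s).ncard := by
  set p : α → β × γ := fun x => (f x, g x)
  calc (f '' s).ncard = (Prod.fst '' (p '' s)).ncard := by rw [Set.image_image]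
    _ = (p '' s).ncard := Set.InjOn.ncard_image <| by
        rintro _ ⟨x, hx, rfl⟩ _ ⟨y, hy, rfl⟩ hxy
        exact Prod.ext hxy ((h x hx y hy).1 hxy)
    _ = (Prod.snd '' (p '' s)).ncard := Eq.symm <| Set.InjOn.ncard_image <| by
        rintro _ ⟨x, hx, rfl⟩ _ ⟨y, hy, rfl⟩ hxy
        exact Prod.ext ((h x hx y hy).2 hxy) hxy
    _ = (g '' s).ncard := by rw [Set.image_image]

open Topology in
lemma IsOpen.exists_mem_apply_lt {W : Type*} {U : Set (W → ℝ)} (hU : IsOpen U) {z : W → ℝ}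
    (hz : z ∈ U) {a b : W} (hab : a ≠ b) (hle : z a ≤ z b) : ∃ y ∈ U, y a < y b := by
  classical
  set φ : ℝ → W → ℝ := fun t => Function.update z b (z b + t)
  have hφ : Continuous φ := continuous_const.update b (continuous_const.add continuous_id)
  have hU0 : U ∈ 𝓝 (φ 0) := by simpa [φ] using hU.mem_nhds hz
  obtain ⟨t, htU, ht⟩ := (((hφ.tendsto 0).eventually_mem hU0).filter_mono nhdsWithin_le_nhds
    |>.and (self_mem_nhdsWithin (s := Set.Ioi 0))).exists
  exact ⟨φ t, htU, by simpa [φ, hab] using hle.trans_lt (lt_add_of_pos_right _ ht)⟩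

lemma lt_of_mem_connectedComponentIn {X : Type*} [TopologicalSpace X] {F : Set X}
    {f g : X → ℝ} (hf : Continuous f) (hg : Continuous g) (hfg : ∀ x ∈ F, f x ≠ g x) {x y : X}
    (hy : y ∈ connectedComponentIn F x) (hx : f x < g x) : f y < g y := by
  by_contra! hle
  have hxF : x ∈ F := connectedComponentIn_nonempty_iff.1 ⟨y, hy⟩
  obtain ⟨p, hp, hpeq⟩ := isPreconnected_connectedComponentIn.intermediate_value₂
    (mem_connectedComponentIn hxF) hy hf.continuousOn hg.continuousOn hx.le hle
  exact hfg p (connectedComponentIn_subset _ _ hp) hpeq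

section Contraction

variable {W : Type*} {a b : W}

open Classical in
/-- `H.map (contractMap hab)` is the contraction `H / ab`, on the vertex set `W ∖ {b}`. -/
noncomputable def contractMap (hab : a ≠ b) (x : W) : {x : W // x ≠ b} :=
  if h : x = b then ⟨a, hab⟩ else ⟨x, h⟩

@[simp]
lemma contractMap_coe (hab : a ≠ b) (x : {x : W // x ≠ b}) : contractMap hab x = x :=
  dif_neg x.2

lemma contractMap_surjective (hab : a ≠ b) : Function.Surjective (contractMap hab) :=
  fun x => ⟨x, contractMap_coe hab x⟩

lemma contractMap_right (hab : a ≠ b) : contractMap hab b = contractMap hab a := by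
  simp [contractMap, hab]

lemma apply_contractMap (hab : a ≠ b) {α : Type*} {z : W → α} (h : z a = z b) (x : W) :
    z (contractMap hab x) = z x := by
  unfold contractMap
  split_ifs with hx
  · rw [hx, h]
  · rfl

lemma forall_contractMap_iff (hab : a ≠ b) {P : W → Prop}
    (hP : ∀ p, P (contractMap hab p) ↔ P p) : (∀ x : {x // x ≠ b}, P x) ↔ ∀ v, P v := by
  simp only [(contractMap_surjective hab).forall, hP]

variable {H : SimpleGraph W}

lemma contractMap_ne_of_adj (hab : a ≠ b) {p q : W}
    (h : (H.deleteEdges {s(a, b)}).Adj p q) : contractMap hab p ≠ contractMap hab q := by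
  rw [SimpleGraph.deleteEdges_adj, Set.mem_singleton_iff] at h
  intro heq
  have := congrArg Subtype.val heq
  unfold contractMap at this
  split_ifs at this with hp hq hq <;> subst_vars
  · exact h.1.ne rfl
  · exact h.2 Sym2.eq_swap
  · exact h.2 rfl
  · exact h.1.ne rfl

lemma deleteEdges_adj_of_contractMap_ne (hab : a ≠ b) {p q : W} (h : H.Adj p q)
    (hne : contractMap hab p ≠ contractMap hab q) : (H.deleteEdges {s(a, b)}).Adj p q := by
  refine SimpleGraph.deleteEdges_adj.2 ⟨h, fun hs => ?_⟩
  rw [Set.mem_singleton_iff, Sym2.eq_iff] at hs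
  rcases hs with ⟨rfl, rfl⟩ | ⟨rfl, rfl⟩
  · exact hne (contractMap_right hab).symm
  · exact hne (contractMap_right hab)

lemma forall_adj_map_contractMap_iff (hab : a ≠ b) {P : W → W → Prop}
    (hP : ∀ p q, P (contractMap hab p) (contractMap hab q) ↔ P p q) :
    (∀ x y, (H.map (contractMap hab)).Adj x y → P x y) ↔
      ∀ p q, (H.deleteEdges {s(a, b)}).Adj p q → P p q := by
  constructor
  · intro h p q hpq
    rw [← hP]
    exact h _ _ ⟨contractMap_ne_of_adj hab hpq, p, q, (H.deleteEdges_le _) hpq, rfl, rfl⟩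
  · rintro h _ _ ⟨hne, p, q, hpq, rfl, rfl⟩
    exact (hP p q).2 (h p q (deleteEdges_adj_of_contractMap_ne hab hpq hne))

lemma forall_adj_deleteEdges_iff {P : W → W → Prop} (h : H.Adj a b) (hPab : P a b)
    (hPba : P b a) :
    (∀ u w, (H.deleteEdges {s(a, b)}).Adj u w → P u w) ↔ ∀ u w, H.Adj u w → P u w := by
  refine ⟨fun hP u w huw => ?_, fun hP u w huw => hP u w (H.deleteEdges_le _ huw)⟩
  by_cases he : s(u, w) = s(a, b)
  · rcases Sym2.eq_iff.1 he with ⟨rfl, rfl⟩ | ⟨rfl, rfl⟩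
    exacts [hPab, hPba]
  · exact hP u w (SimpleGraph.deleteEdges_adj.2 ⟨huw, he⟩)

lemma injOn_comp_val (hab : a ≠ b) {α : Type*} :
    Set.InjOn (· ∘ (Subtype.val : {x // x ≠ b} → W)) {z : W → α | z a = z b} := by
  intro z hz z' hz' heq
  funext x
  rw [← apply_contractMap hab hz x, ← apply_contractMap hab hz' x]
  exact congrFun heq _

lemma image_comp_val_inter_eq (hab : a ≠ b) {α : Type*} {S : Set (W → α)}
    {S' : Set ({x // x ≠ b} → α)}
    (hS : ∀ z : W → α, z a = z b → (z ∈ S ↔ z ∘ Subtype.val ∈ S')) :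
    (· ∘ Subtype.val) '' (S ∩ {z | z a = z b}) = S' := by
  ext y
  constructor
  · rintro ⟨z, ⟨hzS, hz⟩, rfl⟩
    exact (hS z hz).1 hzS
  · intro hy
    have htie : (y ∘ contractMap hab) a = (y ∘ contractMap hab) b :=
      congrArg y (contractMap_right hab).symm
    have hval : y ∘ contractMap hab ∘ Subtype.val = y := funext fun x => by simp
    refine ⟨y ∘ contractMap hab, ⟨(hS _ htie).2 ?_, htie⟩, hval⟩
    rwa [Function.comp_assoc, hval]

variable [Finite W]

lemma ncard_edgeSet_deleteEdges_lt (h : H.Adj a b) :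
    (H.deleteEdges {s(a, b)}).edgeSet.ncard < H.edgeSet.ncard := by
  rw [SimpleGraph.edgeSet_deleteEdges]
  exact Set.ncard_sdiff_singleton_lt_of_mem h

lemma ncard_edgeSet_map_contractMap_lt (h : H.Adj a b) :
    (H.map (contractMap h.ne)).edgeSet.ncard < H.edgeSet.ncard := by
  refine lt_of_le_of_lt ?_ (ncard_edgeSet_deleteEdges_lt h)
  refine (Set.ncard_le_ncard (t := Sym2.map (contractMap h.ne) '' _) ?_).trans
    Set.ncard_image_le
  intro e he
  induction e using Sym2.ind with
  | _ x y =>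
    obtain ⟨hne, p, q, hpq, rfl, rfl⟩ := he
    exact ⟨s(p, q), deleteEdges_adj_of_contractMap_ne h.ne hpq hne, rfl⟩

end Contraction

universe u

theorem SimpleGraph.induction_on_deleteEdges_contract
    {motive : ∀ (W : Type u) [Finite W], SimpleGraph W → Prop}
    (bot : ∀ (W : Type u) [Finite W], motive W ⊥)
    (step : ∀ (W : Type u) [Finite W] (H : SimpleGraph W) (a b : W) (h : H.Adj a b),
      motive W (H.deleteEdges {s(a, b)}) → motive {x // x ≠ b} (H.map (contractMap h.ne)) →
        motive W H)
    (W : Type u) [Finite W] (H : SimpleGraph W) : motive W H := by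
  induction hn : H.edgeSet.ncard using Nat.strong_induction_on generalizing W with
  | _ n ih =>
    rcases eq_or_ne H ⊥ with rfl | hH
    · exact bot W
    obtain ⟨a, b, h⟩ := SimpleGraph.ne_bot_iff_exists_adj.1 hH
    exact step W H a b h (ih _ (hn ▸ ncard_edgeSet_deleteEdges_lt h) W _ rfl)
      (ih _ (hn ▸ ncard_edgeSet_map_contractMap_lt h) _ _ rfl)

section ChromaticPolynomial

variable {W : Type*} {H : SimpleGraph W} {a b : W}

lemma IsChromaticPoly.unique {P Q : ℤ[X]} (hP : IsChromaticPoly H P)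
    (hQ : IsChromaticPoly H Q) : P = Q :=
  eq_of_infinite_eval_eq P Q <| Set.infinite_of_injective_forall_mem Nat.cast_injective
    fun k => by simp [hP k, hQ k]

variable [Finite W]

lemma properColoringCount_bot (k : ℕ) :
    properColoringCount (⊥ : SimpleGraph W) k = k ^ Nat.card W := by
  rw [properColoringCount, Nat.card_congr (Equiv.subtypeUnivEquiv fun f u v h => h.elim),
    Nat.card_fun, Nat.card_eq_fintype_card, Fintype.card_fin]

lemma properColoringCount_deleteEdges (h : H.Adj a b) (k : ℕ) :
    properColoringCount (H.deleteEdges {s(a, b)}) k =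
      properColoringCount H k + properColoringCount (H.map (contractMap h.ne)) k := by
  simp only [properColoringCount, ← Set.ncard_setOf_eq_natCard]
  set C := {f : W → Fin k | ∀ u v, (H.deleteEdges {s(a, b)}).Adj u v → f u ≠ f v}
  rw [← Set.ncard_inter_add_ncard_sdiff_eq_ncard C {f | f a = f b}, add_comm]
  congr 1
  · congr 1
    ext f
    simp only [C, Set.mem_sdiff, Set.mem_ofPred_eq]
    refine ⟨fun ⟨hf, hne⟩ => (forall_adj_deleteEdges_iff
      (P := fun u v => f u ≠ f v) h hne (Ne.symm hne)).1 hf,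
      fun hf => ⟨fun u v huv => hf u v (H.deleteEdges_le _ huv), hf a b h⟩⟩
  · rw [← ((injOn_comp_val h.ne).mono Set.inter_subset_right).ncard_image,
      image_comp_val_inter_eq h.ne fun z hz => ?_]
    exact (forall_adj_map_contractMap_iff h.ne (P := fun p q => z p ≠ z q) fun p q => by
      simp only [apply_contractMap h.ne hz]).symm

lemma isChromaticPoly_bot : IsChromaticPoly (⊥ : SimpleGraph W) (X ^ Nat.card W) :=
  fun k => by simp [properColoringCount_bot]

lemma IsChromaticPoly.sub_of_deleteEdges {P Q : ℤ[X]} (h : H.Adj a b)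
    (hP : IsChromaticPoly (H.deleteEdges {s(a, b)}) P)
    (hQ : IsChromaticPoly (H.map (contractMap h.ne)) Q) : IsChromaticPoly H (P - Q) :=
  fun k => by rw [eval_sub, hP k, hQ k, properColoringCount_deleteEdges h]; push_cast; ring

end ChromaticPolynomial

theorem exists_isChromaticPoly (W : Type u) [Finite W] (H : SimpleGraph W) :
    ∃ P, IsChromaticPoly H P :=
  SimpleGraph.induction_on_deleteEdges_contract (motive := fun _ _ H => ∃ P, IsChromaticPoly H P)
    (fun _ _ => ⟨_, isChromaticPoly_bot⟩)
    (fun _ _ _ _ _ h ⟨_, hP⟩ ⟨_, hQ⟩ => ⟨_, hP.sub_of_deleteEdges h hQ⟩) W H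

section Cells

variable {W : Type*} {H : SimpleGraph W} {k : ℕ} {y z : W → ℝ}

/-- The part of `arrComplement H (k + 2)` inside the open cube `(0, k)^W`; its regions are the
bounded regions of the arrangement. -/
def boxComplement (H : SimpleGraph W) (k : ℕ) : Set (W → ℝ) :=
  {z | (∀ v, z v ∈ Set.Ioo 0 (k : ℝ) ∧ ∀ i : ℕ, z v ≠ i) ∧ ∀ u w, H.Adj u w → z u ≠ z w}

/-- Two points of `boxComplement H k` lie in the same region iff their data agree
(`mem_cell_iff`), so regions are counted by their data. -/
noncomputable def regionData (H : SimpleGraph W) (z : W → ℝ) : (W → ℕ) × (W → W → Prop) :=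
  (fun v => ⌊z v⌋₊, fun u w => H.Adj u w ∧ z u < z w)

noncomputable def regionCount (H : SimpleGraph W) (k : ℕ) : ℕ :=
  (regionData H '' boxComplement H k).ncard

def cell (H : SimpleGraph W) (z : W → ℝ) : Set (W → ℝ) :=
  {y | (∀ v, y v ∈ Set.Ioo (⌊z v⌋₊ : ℝ) (⌊z v⌋₊ + 1)) ∧ ∀ u w, H.Adj u w → z u < z w → y u < y w}

lemma regionData_eq_iff : regionData H y = regionData H z ↔
    (∀ v, ⌊y v⌋₊ = ⌊z v⌋₊) ∧ ∀ u w, H.Adj u w → (y u < y w ↔ z u < z w) := by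
  simp only [regionData, Prod.mk.injEq, funext_iff, eq_iff_iff]
  exact and_congr_right fun _ => forall₂_congr fun u w => by tauto

lemma floor_mem_Ioo_of_mem_boxComplement (hz : z ∈ boxComplement H k) (v : W) :
    z v ∈ Set.Ioo (⌊z v⌋₊ : ℝ) (⌊z v⌋₊ + 1) ∧ ⌊z v⌋₊ < k := by
  obtain ⟨⟨h0, hk⟩, hi⟩ := hz.1 v
  refine ⟨⟨(Nat.floor_le h0.le).lt_of_ne (hi _).symm, Nat.lt_floor_add_one _⟩, ?_⟩
  exact (Nat.floor_lt h0.le).2 hk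

lemma self_mem_cell (hz : z ∈ boxComplement H k) : z ∈ cell H z :=
  ⟨fun v => (floor_mem_Ioo_of_mem_boxComplement hz v).1, fun _ _ _ h => h⟩

lemma mem_cell_iff (hz : z ∈ boxComplement H k) :
    y ∈ cell H z ↔ y ∈ boxComplement H k ∧ regionData H y = regionData H z := by
  rw [regionData_eq_iff]
  constructor
  · rintro ⟨hbox, hedge⟩
    have hfloor v : ⌊y v⌋₊ = ⌊z v⌋₊ :=
      (Nat.floor_eq_iff ((Nat.cast_nonneg _).trans (hbox v).1.le)).2 ⟨(hbox v).1.le, (hbox v).2⟩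
    have horient u w (huw : H.Adj u w) : y u < y w ↔ z u < z w :=
      ⟨fun hy => (hz.2 u w huw).lt_or_gt.resolve_right fun hzw =>
        (hedge w u huw.symm hzw).not_gt hy, hedge u w huw⟩
    refine ⟨⟨fun v => ⟨⟨?_, ?_⟩, fun i hi => ?_⟩, fun u w huw => ?_⟩, hfloor, horient⟩
    · exact (Nat.cast_nonneg _).trans_lt (hbox v).1
    · have := (floor_mem_Ioo_of_mem_boxComplement hz v).2
      exact (hbox v).2.trans_le (by exact_mod_cast this)
    · have h1 := (hbox v).1
      have h2 := (hbox v).2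
      rw [hi] at h1 h2
      have : ⌊z v⌋₊ < i := by exact_mod_cast h1
      have : i < ⌊z v⌋₊ + 1 := by exact_mod_cast h2
      omega
    · rcases (hz.2 u w huw).lt_or_gt with h | h
      · exact ((horient u w huw).2 h).ne
      · exact ((horient w u huw.symm).2 h).ne'
  · rintro ⟨hy, hfloor, horient⟩
    refine ⟨fun v => ?_, fun u w huw => (horient u w huw).2⟩
    rw [← hfloor v]
    exact (floor_mem_Ioo_of_mem_boxComplement hy v).1

lemma isOpen_cell [Finite W] (H : SimpleGraph W) (z : W → ℝ) : IsOpen (cell H z) := by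
  simp only [cell, Set.ofPred_and, Set.ofPred_forall]
  refine (isOpen_iInter_of_finite fun v => ?_).inter
    (isOpen_iInter_of_finite fun u => isOpen_iInter_of_finite fun w =>
      isOpen_iInter_of_finite fun _ => isOpen_iInter_of_finite fun _ => ?_)
  · exact isOpen_Ioo.preimage (continuous_apply v)
  · exact isOpen_lt (continuous_apply u) (continuous_apply w)

lemma convex_cell (H : SimpleGraph W) (z : W → ℝ) : Convex ℝ (cell H z) := by
  rintro y ⟨hy, hy'⟩ y' ⟨hy₁, hy₁'⟩ s t hs ht hst
  refine ⟨fun v => convex_Ioo _ _ (hy v) (hy₁ v) hs ht hst, fun u w huw hzuw => ?_⟩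
  have := convex_Ioi (0 : ℝ) (sub_pos.2 (hy' u w huw hzuw)) (sub_pos.2 (hy₁' u w huw hzuw))
    hs ht hst
  simp only [Set.mem_Ioi, smul_eq_mul, Pi.add_apply, Pi.smul_apply] at this ⊢
  nlinarith

end Cells

section DeletionContraction

variable {W : Type*} {H : SimpleGraph W} {k : ℕ} {a b : W} {y z : W → ℝ}

lemma mem_boxComplement_iff_deleteEdges (h : H.Adj a b) :
    z ∈ boxComplement H k ↔ z ∈ boxComplement (H.deleteEdges {s(a, b)}) k ∧ z a ≠ z b := by
  refine ⟨fun hz => ⟨⟨hz.1, fun u w huw => hz.2 u w (H.deleteEdges_le _ huw)⟩, hz.2 a b h⟩,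
    fun ⟨hz, hne⟩ => ⟨hz.1, ?_⟩⟩
  exact (forall_adj_deleteEdges_iff (P := fun u w => z u ≠ z w) h hne hne.symm).1 hz.2

lemma exists_regionData_eq_of_lt_of_lt (hy : y ∈ boxComplement H k)
    (hz : z ∈ boxComplement H k) (hya : y a < y b) (hzb : z b < z a)
    (heq : regionData H y = regionData H z) :
    ∃ x ∈ boxComplement H k, x a = x b ∧ regionData H x = regionData H y := by
  have hzy : z ∈ cell H y := (mem_cell_iff hy).2 ⟨hz, heq.symm⟩
  obtain ⟨x, hx, hxab⟩ := (convex_cell H y).isPreconnected.intermediate_value₂ (self_mem_cell hy)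
    hzy (continuous_apply a).continuousOn (continuous_apply b).continuousOn hya.le hzb.le
  exact ⟨x, ((mem_cell_iff hy).1 hx).1, hxab, ((mem_cell_iff hy).1 hx).2⟩

lemma ncard_image_regionData_deleteEdges (h : H.Adj a b) :
    (regionData H '' (boxComplement (H.deleteEdges {s(a, b)}) k ∩ {z | z a < z b})).ncard =
      (regionData (H.deleteEdges {s(a, b)}) ''
        (boxComplement (H.deleteEdges {s(a, b)}) k ∩ {z | z a < z b})).ncard := by
  refine Set.ncard_image_eq_of_eq_iff fun y hy z hz => ?_
  rw [regionData_eq_iff, regionData_eq_iff,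
    forall_adj_deleteEdges_iff (P := fun u w => (y u < y w ↔ z u < z w)) h
      (iff_of_true hy.2 hz.2) (iff_of_false (lt_asymm hy.2) (lt_asymm hz.2))]

lemma ncard_image_regionData_contract (h : H.Adj a b) :
    (regionData (H.deleteEdges {s(a, b)}) ''
        (boxComplement (H.deleteEdges {s(a, b)}) k ∩ {z | z a = z b})).ncard =
      regionCount (H.map (contractMap h.ne)) k := by
  have hbox (z : W → ℝ) (hz : z a = z b) :
      z ∈ boxComplement (H.deleteEdges {s(a, b)}) k ↔
        z ∘ Subtype.val ∈ boxComplement (H.map (contractMap h.ne)) k :=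
    and_congr (forall_contractMap_iff h.ne
        (P := fun v => z v ∈ Set.Ioo 0 (k : ℝ) ∧ ∀ i : ℕ, z v ≠ i) fun p => by
          simp only [apply_contractMap h.ne hz]).symm
      (forall_adj_map_contractMap_iff h.ne (P := fun p q => z p ≠ z q) fun p q => by
        simp only [apply_contractMap h.ne hz]).symm
  rw [regionCount, ← image_comp_val_inter_eq h.ne hbox, Set.image_image]
  refine Set.ncard_image_eq_of_eq_iff fun y hy z hz => ?_
  have htie (q : W) : y (contractMap h.ne q) = y q ∧ z (contractMap h.ne q) = z q :=
    ⟨apply_contractMap h.ne hy.2 q, apply_contractMap h.ne hz.2 q⟩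
  rw [regionData_eq_iff, regionData_eq_iff, Function.comp_def, Function.comp_def,
    forall_contractMap_iff h.ne (P := fun v => ⌊y v⌋₊ = ⌊z v⌋₊) (by simp [htie]),
    forall_adj_map_contractMap_iff h.ne (P := fun u w => (y u < y w ↔ z u < z w))
      (by simp [htie])]

variable [Finite W]

lemma finite_image_regionData {G : SimpleGraph W} {S : Set (W → ℝ)}
    (hS : S ⊆ boxComplement G k) : (regionData H '' S).Finite :=
  ((Set.Finite.pi fun _ => Set.finite_Iio k).prod Set.finite_univ).subset <| by
    rintro _ ⟨z, hz, rfl⟩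
    exact ⟨fun v _ => (floor_mem_Ioo_of_mem_boxComplement (hS hz) v).2, trivial⟩

lemma exists_regionData_eq_of_le (hz : z ∈ boxComplement H k) (hab : a ≠ b)
    (hle : z a ≤ z b) :
    ∃ y ∈ boxComplement H k, y a < y b ∧ regionData H y = regionData H z := by
  obtain ⟨y, hy, hlt⟩ := (isOpen_cell H z).exists_mem_apply_lt (self_mem_cell hz) hab hle
  exact ⟨y, ((mem_cell_iff hz).1 hy).1, hlt, ((mem_cell_iff hz).1 hy).2⟩

lemma image_regionData_lt_union_gt (hab : a ≠ b) :
    regionData H '' (boxComplement H k ∩ {z | z a < z b}) ∪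
      regionData H '' (boxComplement H k ∩ {z | z b < z a}) =
      regionData H '' boxComplement H k := by
  refine (Set.union_subset (Set.image_mono Set.inter_subset_left)
    (Set.image_mono Set.inter_subset_left)).antisymm ?_
  rintro _ ⟨z, hz, rfl⟩
  rcases lt_or_ge (z b) (z a) with hlt | hle
  · exact Or.inr ⟨z, ⟨hz, hlt⟩, rfl⟩
  · obtain ⟨y, hy, hlt, hyz⟩ := exists_regionData_eq_of_le hz hab hle
    exact Or.inl ⟨y, ⟨hy, hlt⟩, hyz⟩

lemma image_regionData_lt_inter_gt (hab : a ≠ b) :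
    regionData H '' (boxComplement H k ∩ {z | z a < z b}) ∩
      regionData H '' (boxComplement H k ∩ {z | z b < z a}) =
      regionData H '' (boxComplement H k ∩ {z | z a = z b}) := by
  refine subset_antisymm ?_ ?_
  · rintro _ ⟨⟨y, hy, rfl⟩, ⟨z, hz, hzy⟩⟩
    obtain ⟨x, hx, hxab, hxy⟩ := exists_regionData_eq_of_lt_of_lt hy.1 hz.1 hy.2 hz.2 hzy.symm
    exact ⟨x, ⟨hx, hxab⟩, hxy⟩
  · rintro _ ⟨z, ⟨hz, htie⟩, rfl⟩
    obtain ⟨y, hy, hlt, hyz⟩ := exists_regionData_eq_of_le hz hab htie.le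
    obtain ⟨y', hy', hlt', hyz'⟩ := exists_regionData_eq_of_le hz hab.symm htie.ge
    exact ⟨⟨y, ⟨hy, hlt⟩, hyz⟩, ⟨y', ⟨hy', hlt'⟩, hyz'⟩⟩

theorem regionCount_eq_add (h : H.Adj a b) (k : ℕ) :
    regionCount H k =
      regionCount (H.deleteEdges {s(a, b)}) k + regionCount (H.map (contractMap h.ne)) k := by
  set Ω := boxComplement (H.deleteEdges {s(a, b)}) k
  have hsplit : boxComplement H k = (Ω ∩ {z | z a < z b}) ∪ (Ω ∩ {z | z b < z a}) := by
    ext z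
    simp only [mem_boxComplement_iff_deleteEdges h, ne_iff_lt_or_gt, Set.mem_union,
      Set.mem_inter_iff, Set.mem_ofPred_eq, and_or_left]
    rfl
  have hdisj : Disjoint (regionData H '' (Ω ∩ {z | z a < z b}))
      (regionData H '' (Ω ∩ {z | z b < z a})) := by
    refine Set.disjoint_left.2 ?_
    rintro _ ⟨y, hy, rfl⟩ ⟨z, hz, hzy⟩
    exact lt_asymm hz.2 (((regionData_eq_iff.1 hzy).2 a b h).2 hy.2)
  have hfin {S : Set (W → ℝ)} (hS : S ⊆ Ω) (G : SimpleGraph W) : (regionData G '' S).Finite :=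
    finite_image_regionData hS
  have hba := ncard_image_regionData_deleteEdges (k := k) h.symm
  rw [Sym2.eq_swap] at hba
  rw [regionCount, hsplit, Set.image_union, Set.ncard_union_eq hdisj
      (hfin Set.inter_subset_left H) (hfin Set.inter_subset_left H),
    ncard_image_regionData_deleteEdges h, hba, ← Set.ncard_union_add_ncard_inter _ _
      (hfin Set.inter_subset_left _) (hfin Set.inter_subset_left _),
    image_regionData_lt_union_gt h.ne, image_regionData_lt_inter_gt h.ne,
    ncard_image_regionData_contract h]
  rfl

end DeletionContraction

section Count

variable {W : Type*} [Finite W]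

lemma regionCount_bot (k : ℕ) : regionCount (⊥ : SimpleGraph W) k = k ^ Nat.card W := by
  have himage : (fun z v => ⌊z v⌋₊) '' boxComplement (⊥ : SimpleGraph W) k =
      Set.range fun (c : W → Fin k) v => (c v : ℕ) := by
    refine subset_antisymm ?_ ?_
    · rintro _ ⟨z, hz, rfl⟩
      exact ⟨fun v => ⟨_, (floor_mem_Ioo_of_mem_boxComplement hz v).2⟩, rfl⟩
    · rintro _ ⟨c, rfl⟩
      have hc v : ((c v : ℕ) : ℝ) + 1 ≤ k := by exact_mod_cast (c v).2
      refine ⟨fun v => (c v : ℕ) + 1 / 2, ⟨fun v => ⟨⟨by positivity, by linarith [hc v]⟩,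
        fun i hi => ?_⟩, fun _ _ h => h.elim⟩, funext fun v => ?_⟩
      · rcases le_or_gt i (c v) with hle | hlt
        · have : (i : ℝ) ≤ c v := by exact_mod_cast hle
          linarith
        · have : ((c v : ℕ) : ℝ) + 1 ≤ i := by exact_mod_cast hlt
          linarith
      · exact (Nat.floor_eq_iff (by positivity)).2 ⟨by linarith, by linarith⟩
  rw [regionCount, Set.ncard_image_eq_of_eq_iff (g := fun z v => ⌊z v⌋₊) fun y _ z _ => by
      simp [regionData_eq_iff, funext_iff], himage,
    Set.ncard_range_of_injective fun c c' h => funext fun v => Fin.ext (congrFun h v),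
    Nat.card_fun, Nat.card_eq_fintype_card, Fintype.card_fin]

end Count

theorem regionCount_eq_eval (W : Type u) [Finite W] (H : SimpleGraph W) {P : ℤ[X]}
    (hP : IsChromaticPoly H P) (k : ℕ) :
    (regionCount H k : ℤ) = (-1) ^ Nat.card W * P.eval (-(k : ℤ)) := by
  refine SimpleGraph.induction_on_deleteEdges_contract
    (motive := fun W _ H => ∀ P, IsChromaticPoly H P →
      (regionCount H k : ℤ) = (-1) ^ Nat.card W * P.eval (-(k : ℤ))) (fun W _ P hP => ?_)
    (fun W _ H a b h ihdel ihcon P hP => ?_) W H P hP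
  · rw [hP.unique isChromaticPoly_bot, regionCount_bot, eval_pow, eval_X, ← mul_pow]
    simp
  · obtain ⟨P₁, hP₁⟩ := exists_isChromaticPoly W (H.deleteEdges {s(a, b)})
    obtain ⟨P₂, hP₂⟩ := exists_isChromaticPoly _ (H.map (contractMap h.ne))
    have hcard : Nat.card W = Nat.card {x // x ≠ b} + 1 := by
      classical
      rw [← Finite.card_option, Nat.card_congr (Equiv.optionSubtypeNe b)]
    rw [hP.unique (hP₁.sub_of_deleteEdges h hP₂), regionCount_eq_add h, Nat.cast_add,
      ihdel P₁ hP₁, ihcon P₂ hP₂, hcard, eval_sub]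
    ring

section Components

variable {V : Type*} {G : SimpleGraph V} {k : ℕ} {x z : V → ℝ}

lemma boxComplement_subset_arrComplement : boxComplement G k ⊆ arrComplement G (k + 2) :=
  fun _ hz => ⟨hz.2, fun v i _ => (hz.1 v).2 i⟩

lemma isBounded_cell [Fintype V] (G : SimpleGraph V) (z : V → ℝ) :
    Bornology.IsBounded (cell G z) :=
  (Metric.isBounded_Icc (fun v => (⌊z v⌋₊ : ℝ)) fun v => (⌊z v⌋₊ : ℝ) + 1).subset
    fun _ hy => ⟨fun v => (hy.1 v).1.le, fun v => (hy.1 v).2.le⟩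

lemma connectedComponentIn_eq_cell (hz : z ∈ boxComplement G k) :
    connectedComponentIn (arrComplement G (k + 2)) z = cell G z := by
  refine subset_antisymm (fun y hy => ?_) ?_
  swap
  · exact (convex_cell G z).isPreconnected.subset_connectedComponentIn (self_mem_cell hz)
      fun y hy => boxComplement_subset_arrComplement ((mem_cell_iff hz).1 hy).1
  refine ⟨fun v => ?_, fun u w huw hzuw => ?_⟩
  · obtain ⟨hzv, hfloor⟩ := floor_mem_Ioo_of_mem_boxComplement hz v
    have hwall (i : ℕ) (hi : i ≤ k) (x : V → ℝ) (hx : x ∈ arrComplement G (k + 2)) :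
        (i : ℝ) ≠ x v := (hx.2 v i hi).symm
    refine ⟨lt_of_mem_connectedComponentIn continuous_const (continuous_apply v)
      (hwall _ hfloor.le) hy hzv.1, ?_⟩
    have := lt_of_mem_connectedComponentIn (continuous_apply v) continuous_const
      (fun x hx => (hwall (⌊z v⌋₊ + 1) hfloor x hx).symm) hy (by exact_mod_cast hzv.2)
    exact_mod_cast this
  · exact lt_of_mem_connectedComponentIn (continuous_apply u) (continuous_apply w)
      (fun x hx => hx.1 u w huw) hy hzuw

noncomputable def outwardDir (k : ℕ) (r : ℝ) : ℝ :=
  if r < 0 then -1 else if (k : ℝ) < r then 1 else 0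

lemma outwardDir_eq_zero_iff {r : ℝ} : outwardDir k r = 0 ↔ 0 ≤ r ∧ r ≤ k := by
  unfold outwardDir
  split_ifs with h0 hk
  · simp [h0.not_ge]
  · simp [hk.not_ge]
  · simpa using ⟨not_lt.1 h0, not_lt.1 hk⟩

lemma strictMono_add_mul_outwardDir {t : ℝ} (ht : 0 ≤ t) :
    StrictMono fun r => r + t * outwardDir k r := by
  intro r s hrs
  simp only [outwardDir]
  split_ifs <;> nlinarith

lemma comp_mem_arrComplement {φ : ℝ → ℝ} (hφ : Function.Injective φ)
    (hfix : ∀ i : ℕ, i ≤ k → φ i = i) (hx : x ∈ arrComplement G (k + 2)) :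
    φ ∘ x ∈ arrComplement G (k + 2) :=
  ⟨fun u w huw => hφ.ne (hx.1 u w huw),
    fun v i hi h => hx.2 v i hi (hφ (h.trans (hfix i hi).symm))⟩

lemma outwardDir_eq_zero_of_isBounded [Fintype V] (hx : x ∈ arrComplement G (k + 2))
    (hbd : Bornology.IsBounded (connectedComponentIn (arrComplement G (k + 2)) x)) (v : V) :
    outwardDir k (x v) = 0 := by
  set ray : ℝ → V → ℝ := fun t v => x v + t * outwardDir k (x v)
  have hray : ray '' Set.Ici 0 ⊆ connectedComponentIn (arrComplement G (k + 2)) x := by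
    refine (isPreconnected_Ici.image _ (Continuous.continuousOn (by fun_prop)))
      |>.subset_connectedComponentIn ⟨0, Set.mem_Ici.2 le_rfl, by simp [ray]⟩ ?_
    rintro _ ⟨t, ht, rfl⟩
    refine comp_mem_arrComplement (strictMono_add_mul_outwardDir ht).injective
      (fun i hi => ?_) hx
    simp [outwardDir_eq_zero_iff.2 ⟨Nat.cast_nonneg i, by exact_mod_cast hi⟩]
  obtain ⟨C, hC⟩ := isBounded_iff_forall_norm_le.1 hbd
  by_contra hne
  set t := |C| + |x v| + 1
  have hle : |ray t v| ≤ C :=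
    (norm_le_pi_norm (ray t) v).trans (hC _ (hray ⟨t, Set.mem_Ici.2 (by positivity), rfl⟩))
  simp only [ray, outwardDir] at hle hne
  split_ifs at hle hne
  · linarith [le_abs_self C, le_abs_self (x v), neg_le_abs (x v + t * -1)]
  · linarith [le_abs_self C, neg_abs_le (x v), le_abs_self (x v + t * 1)]
  · exact hne rfl

lemma mem_boxComplement_of_isBounded [Fintype V] (hx : x ∈ arrComplement G (k + 2))
    (hbd : Bornology.IsBounded (connectedComponentIn (arrComplement G (k + 2)) x)) :
    x ∈ boxComplement G k := by
  refine ⟨fun v => ?_, hx.1⟩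
  obtain ⟨h0, hk⟩ := outwardDir_eq_zero_iff.1 (outwardDir_eq_zero_of_isBounded hx hbd v)
  have hne0 : x v ≠ 0 := by simpa using hx.2 v 0 (Nat.zero_le _)
  refine ⟨⟨h0.lt_of_ne' hne0, hk.lt_of_ne (hx.2 v k le_rfl)⟩, fun i => ?_⟩
  rcases le_or_gt i k with hi | hi
  · exact hx.2 v i hi
  · exact (hk.trans_lt (by exact_mod_cast hi)).ne

lemma ncard_boundedComponents_eq_regionCount [Fintype V] (G : SimpleGraph V) (k : ℕ) :
    {C : Set (V → ℝ) | (∃ x ∈ arrComplement G (k + 2),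
        C = connectedComponentIn (arrComplement G (k + 2)) x) ∧ Bornology.IsBounded C}.ncard =
      regionCount G k := by
  have himage : {C : Set (V → ℝ) | (∃ x ∈ arrComplement G (k + 2),
      C = connectedComponentIn (arrComplement G (k + 2)) x) ∧ Bornology.IsBounded C} =
      connectedComponentIn (arrComplement G (k + 2)) '' boxComplement G k := by
    ext C
    constructor
    · rintro ⟨⟨x, hx, rfl⟩, hbd⟩
      exact ⟨x, mem_boxComplement_of_isBounded hx hbd, rfl⟩
    · rintro ⟨z, hz, rfl⟩
      refine ⟨⟨z, boxComplement_subset_arrComplement hz, rfl⟩, ?_⟩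
      rw [connectedComponentIn_eq_cell hz]
      exact isBounded_cell G z
  rw [himage, regionCount]
  refine Set.ncard_image_eq_of_eq_iff fun y hy z hz => ?_
  rw [connectedComponentIn_eq_cell hy, connectedComponentIn_eq_cell hz]
  refine ⟨fun h => ((mem_cell_iff hz).1 (h ▸ self_mem_cell hy)).2, fun h => ?_⟩
  ext x
  rw [mem_cell_iff hy, mem_cell_iff hz, h]

end Components

/-- The arrangement `A(G;m)` has exactly `(-1)^|V| χ_G(-(m-2))` bounded regions. -/
theorem card_bounded_regions {V : Type*} [Fintype V] (G : SimpleGraph V)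
    (m : ℕ) (hm : 2 ≤ m) (P : Polynomial ℤ) (hP : IsChromaticPoly G P) :
    (Nat.card {C : Set (V → ℝ) //
        (∃ x ∈ arrComplement G m, C = connectedComponentIn (arrComplement G m) x) ∧
        Bornology.IsBounded C} : ℤ) =
      (-1) ^ (Fintype.card V) * P.eval (-((m : ℤ) - 2)) := by
  obtain ⟨k, rfl⟩ := Nat.exists_eq_add_of_le' hm
  rw [← Set.ncard_setOf_eq_natCard, ncard_boundedComponents_eq_regionCount,
    regionCount_eq_eval V G hP, Nat.card_eq_fintype_card]
  push_cast
  ring_nf
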